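/- A presheaf Z on the theory Θ_T of a monad with arities (Θ₀, i₀, 𝒜, T) lies in the essential image of the nerve functor N_T : T-Alg → [Θ_Tᵒᵖ, Set] if and only if Z satisfies the Segal condition, i.e., the restriction res_j(Z) = Z∘j along the bijective-on-objects functor j : Θ₀ → Θ_T lies in the essential image of the dense-nerve functor hom_𝒜(i₀(-), -) : 𝒜 → [Θ₀ᵒᵖ, Set]. -/

import Mathlib

/-!
A nerve `N_T M` restricts along `j` to the dense nerve `ν M.A` by the free–forgetful adjunction,
since `Θ_T` has the same objects as `Θ₀` and its morphisms are Kleisli maps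
`i₀ θ' ⟶ T (i₀ θ)`.

Conversely, let `φ : ν a ≅ res_j Z`. Transporting the `Θ_T`-action of `Z` along `φ`, each
`f : i₀ θ ⟶ a` gives a map `ν (T i₀ θ) ⟶ ν a`, natural in `(θ, f)`. Because `ν ∘ T` is a left
Kan extension along `i₀` and left Kan extensions into presheaf categories are pointwise, `ν (T a)`
is the colimit of the `ν (T i₀ θ)`, so these maps glue to `ν (T a) ⟶ ν a`; by density this is
`ν m` for a unique `m : T a ⟶ a`. Every `u : i₀ ρ ⟶ T x` factors as a Kleisli map followed by
`T k` with `k : i₀ θ ⟶ x`, which reduces the algebra laws of `m` and the isomorphism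
`N_T (a, m) ≅ Z` to the unit and composition laws of the action of `Θ_T` on `Z`.
-/

open CategoryTheory CategoryTheory.Limits

universe v u₁ u₂

variable {Θ₀ : Type u₁} [Category.{v} Θ₀] {A : Type u₂} [Category.{v} A]

/-- The nerve functor induced by `i : Θ₀ ⥤ 𝒜`, `a ↦ hom_𝒜(i(-), a)`. -/
noncomputable def nerveOf (i : Θ₀ ⥤ A) : A ⥤ Θ₀ᵒᵖ ⥤ Type v :=
  yoneda ⋙ (Functor.whiskeringLeft _ _ (Type v)).obj i.op

/-- `i` is dense when the induced nerve is fully faithful. -/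
def IsDenseF (i : Θ₀ ⥤ A) : Prop :=
  (nerveOf i).Full ∧ (nerveOf i).Faithful

/-- The theory `Θ_T` of a monad `T` relative to arities `i₀ : Θ₀ ⥤ 𝒜`: the
(bo,ff)-factorization of the free-algebra functor composed with `i₀`. -/
def TheoryCat (i₀ : Θ₀ ⥤ A) (T : Monad A) :=
  InducedCategory T.Algebra (fun θ => T.free.obj (i₀.obj θ))

instance (i₀ : Θ₀ ⥤ A) (T : Monad A) : Category (TheoryCat i₀ T) :=
  inferInstanceAs (Category (InducedCategory T.Algebra (fun θ => T.free.obj (i₀.obj θ))))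

/-- The bijective-on-objects part `j : Θ₀ ⥤ Θ_T` of the factorization. -/
def theoryJ (i₀ : Θ₀ ⥤ A) (T : Monad A) : Θ₀ ⥤ TheoryCat i₀ T where
  obj θ := θ
  map f := InducedCategory.homMk (T.free.map (i₀.map f))

/-- The fully faithful part `i : Θ_T ⥤ T-Alg` of the factorization, and the nerve
`N_T : T-Alg ⥤ [Θ_Tᵒᵖ, Set]`. -/
noncomputable def theoryNerve (i₀ : Θ₀ ⥤ A) (T : Monad A) :
    T.Algebra ⥤ (TheoryCat i₀ T)ᵒᵖ ⥤ Type v :=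
  yoneda ⋙ (Functor.whiskeringLeft _ _ (Type v)).obj (inducedFunctor _).op

/-- Restriction along `j`, `res_j : [Θ_Tᵒᵖ, Set] ⥤ [Θ₀ᵒᵖ, Set]`. -/
def theoryRes (i₀ : Θ₀ ⥤ A) (T : Monad A) :
    ((TheoryCat i₀ T)ᵒᵖ ⥤ Type v) ⥤ Θ₀ᵒᵖ ⥤ Type v :=
  (Functor.whiskeringLeft _ _ (Type v)).obj (theoryJ i₀ T).op

universe u₃ u₄ u₅ u₆ w

open Opposite

namespace CategoryTheory

namespace FunctorToTypes

theorem jointly_surjective_of_isColimit {J : Type u₃} [Category.{u₄} J] {D : Type u₅}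
    [Category.{u₆} D] {F : J ⥤ D ⥤ Type w} {c : Cocone F} (hc : IsColimit c) (d : D)
    (x : c.pt.obj d) :
    ∃ j y, (c.ι.app j).app d y = x := by
  let S : Subfunctor c.pt := ⨆ j, Subfunctor.range (c.ι.app j)
  let c' : Cocone F :=
    { pt := S.toFunctor
      ι :=
        { app j := Subfunctor.lift (c.ι.app j) (le_iSup (fun j => Subfunctor.range (c.ι.app j)) j)
          naturality j j' u := by
            rw [← cancel_mono S.ι]
            simp } }
  have hsection : hc.desc c' ≫ S.ι = 𝟙 c.pt := hc.hom_ext fun j => by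
    rw [hc.fac_assoc]; simp [c']
  have hx : x ∈ S.obj d := by
    convert ((hc.desc c').app d x).2
    exact (types_congr_hom (congr_app hsection d) x).symm
  simpa [S, Subfunctor.iSup_obj] using hx

end FunctorToTypes

variable {C : Type u₃} [Category.{u₄} C] {E : Type u₅} [Category.{v} E]
  {D : Type u₆} [Category.{w} D]

def powerFunctor (e : E) (Q : D ⥤ Type v) : E ⥤ D ⥤ Type v where
  obj x :=
    { obj d := (x ⟶ e) → Q.obj d
      map u := ↾fun F f => Q.map u (F f) }
  map u := { app d := ↾fun F f => F (u ≫ f) }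

def powerFunctorHomEquiv (G : E ⥤ D ⥤ Type v) (e : E) (Q : D ⥤ Type v) :
    (G.obj e ⟶ Q) ≃ (G ⟶ powerFunctor e Q) where
  toFun m :=
    { app x :=
        { app d := ↾fun y f => m.app d ((G.map f).app d y)
          naturality d d' u := by
            ext y
            funext f
            exact (congrArg (m.app d') (NatTrans.naturality_apply (G.map f) u y)).trans
              (NatTrans.naturality_apply m u _) }
      naturality x x' u := by
        ext d y
        funext f
        exact congrArg (m.app d) (types_congr_hom (congr_app (G.map_comp u f) d) y).symm }
  invFun σ := σ.app e ≫ { app d := ↾fun F => F (𝟙 e) }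
  left_inv m := by
    ext d y
    exact congrArg (m.app d) (types_congr_hom (congr_app (G.map_id e) d) y)
  right_inv σ := by
    ext x d y
    funext f
    exact (congr_fun (types_congr_hom (congr_app (σ.naturality f) d) y) (𝟙 e)).trans
      (congrArg ((σ.app x).app d y) (Category.comp_id f))

variable {L : C ⥤ E} {F : C ⥤ D ⥤ Type v}

def costructuredArrowCoconeToPower {e : E} (s : Cocone (CostructuredArrow.proj L e ⋙ F)) :
    F ⟶ L ⋙ powerFunctor e s.pt where
  app c :=
    { app d := ↾fun y f => (s.ι.app (CostructuredArrow.mk f)).app d y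
      naturality d d' u := by
        ext y
        funext f
        exact NatTrans.naturality_apply (s.ι.app (CostructuredArrow.mk f)) u y }
  naturality c c' u := by
    ext d y
    funext f
    exact types_congr_hom (congr_app (s.w (CostructuredArrow.homMk
      (f := CostructuredArrow.mk (L.map u ≫ f)) (f' := CostructuredArrow.mk f) u)) d) y

/-- Functor categories `D ⥤ Type v` are cotensored over `Type v` by `powerFunctor`, which turns
the universal property of a left Kan extension into the pointwise one without any size
assumption on the comma categories. -/
noncomputable def FunctorToTypes.isPointwiseLeftKanExtensionOfIsLeftKanExtension
    (G : E ⥤ D ⥤ Type v) (α : F ⟶ L ⋙ G) [G.IsLeftKanExtension α] :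
    (Functor.LeftExtension.mk G α).IsPointwiseLeftKanExtension := fun e =>
  { desc s := (powerFunctorHomEquiv G e s.pt).symm
      (G.descOfIsLeftKanExtension α _ (costructuredArrowCoconeToPower s))
    fac s j := by
      let σ := G.descOfIsLeftKanExtension α _ (costructuredArrowCoconeToPower s)
      have hσ : α.app j.left ≫ G.map j.hom ≫ σ.app e =
          (costructuredArrowCoconeToPower s).app j.left ≫ (powerFunctor e s.pt).map j.hom := by
        rw [σ.naturality, G.descOfIsLeftKanExtension_fac_app_assoc]
      ext d y
      refine (congr_fun (types_congr_hom (congr_app hσ d) y) (𝟙 e)).trans ?_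
      change (s.ι.app (CostructuredArrow.mk (j.hom ≫ 𝟙 e))).app d y = (s.ι.app j).app d y
      rw [Category.comp_id]
      rfl
    uniq s m hm := by
      refine (Equiv.eq_symm_apply _).mpr ?_
      refine G.hom_ext_of_isLeftKanExtension α _ _ ?_
      rw [G.descOfIsLeftKanExtension_fac]
      ext c d y
      funext f
      exact types_congr_hom (congr_app (hm (CostructuredArrow.mk f)) d) y }

end CategoryTheory

namespace CategoryTheory.Monad

variable {T : Monad A} {x : A} {M : T.Algebra}

lemma adj_homEquiv_apply (F : T.free.obj x ⟶ M) : T.adj.homEquiv x M F = T.η.app x ≫ F.f := by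
  rw [Adjunction.homEquiv_unit, Monad.adj_unit]
  rfl

lemma adj_homEquiv_symm_apply_f (g : x ⟶ T.forget.obj M) :
    ((T.adj.homEquiv x M).symm g).f = T.map g ≫ M.a := by
  rw [Adjunction.homEquiv_counit, Monad.adj_counit]
  rfl

lemma free_hom_f_eq (F : T.free.obj x ⟶ M) : F.f = T.map (T.adj.homEquiv x M F) ≫ M.a := by
  rw [← adj_homEquiv_symm_apply_f, Equiv.symm_apply_apply]

end CategoryTheory.Monad

namespace TheoryCat

variable {i₀ : Θ₀ ⥤ A} {T : Monad A}

def homEquiv {θ' θ : Θ₀} :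
    ((theoryJ i₀ T).obj θ' ⟶ (theoryJ i₀ T).obj θ) ≃ (i₀.obj θ' ⟶ T.obj (i₀.obj θ)) :=
  InducedCategory.homEquiv.trans (T.adj.homEquiv _ _)

lemma adj_homEquiv_hom_comp {θ' θ : Θ₀} (h : (theoryJ i₀ T).obj θ' ⟶ (theoryJ i₀ T).obj θ)
    {M : T.Algebra} (F : T.free.obj (i₀.obj θ) ⟶ M) :
    T.adj.homEquiv _ _ (h.hom ≫ F) = homEquiv h ≫ F.f :=
  T.adj.homEquiv_naturality_right _ _

lemma homEquiv_id (θ : Θ₀) : homEquiv (𝟙 ((theoryJ i₀ T).obj θ)) = T.η.app (i₀.obj θ) :=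
  (Monad.adj_homEquiv_apply _).trans (Category.comp_id _)

lemma homEquiv_comp {θ'' θ' θ : Θ₀} (h : (theoryJ i₀ T).obj θ'' ⟶ (theoryJ i₀ T).obj θ')
    (h' : (theoryJ i₀ T).obj θ' ⟶ (theoryJ i₀ T).obj θ) :
    homEquiv (h ≫ h') = homEquiv h ≫ T.map (homEquiv h') ≫ T.μ.app (i₀.obj θ) :=
  (adj_homEquiv_hom_comp h h'.hom).trans
    (congrArg (homEquiv h ≫ ·) (Monad.free_hom_f_eq h'.hom))

lemma theoryJ_map_comp_homEquiv_symm {θ'' θ' θ : Θ₀} (w : θ'' ⟶ θ')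
    (g : i₀.obj θ' ⟶ T.obj (i₀.obj θ)) :
    (theoryJ i₀ T).map w ≫ homEquiv.symm g = homEquiv.symm (i₀.map w ≫ g) :=
  InducedCategory.hom_ext (T.adj.homEquiv_naturality_left_symm _ _).symm

lemma homEquiv_symm_comp_theoryJ_map {θ' θ θ₂ : Θ₀} (g : i₀.obj θ' ⟶ T.obj (i₀.obj θ))
    (w : θ ⟶ θ₂) :
    homEquiv.symm g ≫ (theoryJ i₀ T).map w = homEquiv.symm (g ≫ T.map (i₀.map w)) :=
  InducedCategory.hom_ext (T.adj.homEquiv_naturality_right_symm _ _).symm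

end TheoryCat

variable {i₀ : Θ₀ ⥤ A} {T : Monad A}

lemma nerveOf_hom_ext {i : Θ₀ ⥤ A} [(nerveOf i).Faithful] {x y : A} {f g : x ⟶ y}
    (h : ∀ (θ : Θ₀) (u : i.obj θ ⟶ x), u ≫ f = u ≫ g) : f = g :=
  (nerveOf i).map_injective (by ext ρ u; exact h ρ.unop u)

noncomputable def nerveIsoTheoryResTheoryNerve (M : T.Algebra) :
    (nerveOf i₀).obj M.A ≅ (theoryRes i₀ T).obj ((theoryNerve i₀ T).obj M) :=
  NatIso.ofComponents (fun ρ => (T.adj.homEquiv (i₀.obj ρ.unop) M).symm.toIso) fun w => by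
    ext q
    exact T.adj.homEquiv_naturality_left_symm _ _

section NerveMonadColimit

variable (i₀ T) [(T.toFunctor ⋙ nerveOf i₀).IsLeftKanExtension (𝟙 (i₀ ⋙ T.toFunctor ⋙ nerveOf i₀))]

noncomputable def isColimitNerveMonadCoconeAt (x : A) :
    IsColimit ((Functor.LeftExtension.mk (T.toFunctor ⋙ nerveOf i₀)
      (𝟙 (i₀ ⋙ T.toFunctor ⋙ nerveOf i₀))).coconeAt x) :=
  FunctorToTypes.isPointwiseLeftKanExtensionOfIsLeftKanExtension _ _ x

variable {i₀ T}

lemma TheoryCat.exists_eq_homEquiv_comp_map {ρ : Θ₀} {x : A} (u : i₀.obj ρ ⟶ T.obj x) :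
    ∃ (θ : Θ₀) (h : (theoryJ i₀ T).obj ρ ⟶ (theoryJ i₀ T).obj θ) (k : i₀.obj θ ⟶ x),
      u = TheoryCat.homEquiv h ≫ T.map k := by
  obtain ⟨f, (g : i₀.obj ρ ⟶ T.obj (i₀.obj f.left)), hg⟩ :=
    FunctorToTypes.jointly_surjective_of_isColimit (isColimitNerveMonadCoconeAt i₀ T x) (op ρ) u
  exact ⟨f.left, TheoryCat.homEquiv.symm g, f.hom, by rw [Equiv.apply_symm_apply]; exact hg.symm⟩

end NerveMonadColimit

section SegalAlgebra

variable {Z : (TheoryCat i₀ T)ᵒᵖ ⥤ Type v} {a : A} (φ : (nerveOf i₀).obj a ≅ (theoryRes i₀ T).obj Z)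

def segalAct {θ' θ : Θ₀} (h : (theoryJ i₀ T).obj θ' ⟶ (theoryJ i₀ T).obj θ)
    (k : i₀.obj θ ⟶ a) : i₀.obj θ' ⟶ a :=
  φ.inv.app (op θ') (Z.map h.op (φ.hom.app (op θ) k))

lemma hom_app_segalAct {θ' θ : Θ₀} (h : (theoryJ i₀ T).obj θ' ⟶ (theoryJ i₀ T).obj θ)
    (k : i₀.obj θ ⟶ a) :
    φ.hom.app (op θ') (segalAct φ h k) = Z.map h.op (φ.hom.app (op θ) k) :=
  Iso.inv_hom_id_app_apply _ _ _

lemma segalAct_id {θ : Θ₀} (k : i₀.obj θ ⟶ a) : segalAct φ (𝟙 _) k = k :=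
  (congrArg (φ.inv.app (op θ)) (Z.map_id_apply _ _)).trans (φ.hom_inv_id_app_apply _ _)

lemma segalAct_comp {θ'' θ' θ : Θ₀} (h : (theoryJ i₀ T).obj θ'' ⟶ (theoryJ i₀ T).obj θ')
    (h' : (theoryJ i₀ T).obj θ' ⟶ (theoryJ i₀ T).obj θ) (k : i₀.obj θ ⟶ a) :
    segalAct φ (h ≫ h') k = segalAct φ h (segalAct φ h' k) :=
  (congrArg (φ.inv.app (op θ'')) (Z.map_comp_apply h'.op h.op _)).trans
    (congrArg (fun z => φ.inv.app (op θ'') (Z.map h.op z)) (hom_app_segalAct φ h' k).symm)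

lemma segalAct_theoryJ_map {θ' θ : Θ₀} (w : θ' ⟶ θ) (k : i₀.obj θ ⟶ a) :
    segalAct φ ((theoryJ i₀ T).map w) k = i₀.map w ≫ k :=
  (congrArg (φ.inv.app (op θ')) (NatTrans.naturality_apply φ.hom w.op k).symm).trans
    (φ.hom_inv_id_app_apply _ _)

noncomputable def segalCocone :
    Cocone (CostructuredArrow.proj i₀ a ⋙ i₀ ⋙ T.toFunctor ⋙ nerveOf i₀) where
  pt := (nerveOf i₀).obj a
  ι :=
    { app f :=
        { app ρ := ↾fun g =>
            segalAct φ ((TheoryCat.homEquiv (θ' := ρ.unop) (θ := f.left)).symm g) f.hom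
          naturality ρ ρ' w := by
            ext g
            exact (congrArg (segalAct φ · f.hom)
              (TheoryCat.theoryJ_map_comp_homEquiv_symm w.unop g).symm).trans
              ((segalAct_comp φ _ _ _).trans (segalAct_theoryJ_map φ _ _)) }
      naturality f f' u := by
        ext ρ g
        exact (congrArg (segalAct φ · f'.hom)
          (TheoryCat.homEquiv_symm_comp_theoryJ_map g u.left).symm).trans
          ((segalAct_comp φ _ _ _).trans (congrArg (segalAct φ _)
            ((segalAct_theoryJ_map φ _ _).trans (CostructuredArrow.w u)))) }

variable [(T.toFunctor ⋙ nerveOf i₀).IsLeftKanExtension (𝟙 (i₀ ⋙ T.toFunctor ⋙ nerveOf i₀))]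

noncomputable def segalStructureMap [(nerveOf i₀).Full] : T.obj a ⟶ a :=
  (nerveOf i₀).preimage ((isColimitNerveMonadCoconeAt i₀ T a).desc (segalCocone φ))

lemma homEquiv_comp_map_comp_segalStructureMap [(nerveOf i₀).Full] {θ' θ : Θ₀}
    (h : (theoryJ i₀ T).obj θ' ⟶ (theoryJ i₀ T).obj θ) (k : i₀.obj θ ⟶ a) :
    (TheoryCat.homEquiv h ≫ T.map k) ≫ segalStructureMap φ = segalAct φ h k := by
  let hlan := isColimitNerveMonadCoconeAt i₀ T a
  have hm : (nerveOf i₀).map (segalStructureMap φ) = hlan.desc (segalCocone φ) :=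
    Functor.map_preimage _ _
  exact (types_congr_hom (congr_app hm (op θ')) _).trans
    ((types_congr_hom (congr_app (hlan.fac _ (CostructuredArrow.mk k)) (op θ')) _).trans
      (congrArg (segalAct φ · k) (Equiv.symm_apply_apply _ _)))

variable [(nerveOf i₀).Full] [(nerveOf i₀).Faithful]

lemma segalStructureMap_unit : T.η.app a ≫ segalStructureMap φ = 𝟙 a := by
  refine nerveOf_hom_ext (i := i₀) fun ρ (f : i₀.obj ρ ⟶ a) => ?_
  calc f ≫ T.η.app a ≫ segalStructureMap φ
      = (TheoryCat.homEquiv (𝟙 ((theoryJ i₀ T).obj ρ)) ≫ T.map f) ≫ segalStructureMap φ := by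
        rw [TheoryCat.homEquiv_id, Category.assoc, ← T.unit_naturality_assoc]
    _ = f ≫ 𝟙 a := by
        rw [homEquiv_comp_map_comp_segalStructureMap, segalAct_id, Category.comp_id]

lemma segalStructureMap_assoc :
    T.μ.app a ≫ segalStructureMap φ = T.map (segalStructureMap φ) ≫ segalStructureMap φ := by
  refine nerveOf_hom_ext (i := i₀) fun ρ u => ?_
  obtain ⟨θ, h, f, rfl⟩ := TheoryCat.exists_eq_homEquiv_comp_map u
  obtain ⟨θ₂, h', k, rfl⟩ := TheoryCat.exists_eq_homEquiv_comp_map f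
  calc (TheoryCat.homEquiv h ≫ T.map (TheoryCat.homEquiv h' ≫ T.map k)) ≫
        T.μ.app a ≫ segalStructureMap φ
      = (TheoryCat.homEquiv (h ≫ h') ≫ T.map k) ≫ segalStructureMap φ := by
        simp only [TheoryCat.homEquiv_comp, Functor.map_comp, Category.assoc, T.mu_naturality_assoc]
    _ = segalAct φ h (segalAct φ h' k) := by
        rw [homEquiv_comp_map_comp_segalStructureMap, segalAct_comp]
    _ = (TheoryCat.homEquiv h ≫ T.map ((TheoryCat.homEquiv h' ≫ T.map k) ≫
          segalStructureMap φ)) ≫ segalStructureMap φ := by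
        rw [homEquiv_comp_map_comp_segalStructureMap, homEquiv_comp_map_comp_segalStructureMap]
    _ = (TheoryCat.homEquiv h ≫ T.map (TheoryCat.homEquiv h' ≫ T.map k)) ≫
          T.map (segalStructureMap φ) ≫ segalStructureMap φ := by
        simp only [Functor.map_comp, Category.assoc]

noncomputable def segalAlgebra : T.Algebra where
  A := a
  a := segalStructureMap φ
  unit := segalStructureMap_unit φ
  assoc := segalStructureMap_assoc φ

lemma adj_homEquiv_hom_comp_segalAlgebra {θ' θ : Θ₀}
    (h : (theoryJ i₀ T).obj θ' ⟶ (theoryJ i₀ T).obj θ)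
    (F : T.free.obj (i₀.obj θ) ⟶ segalAlgebra φ) :
    T.adj.homEquiv _ _ (h.hom ≫ F) = segalAct φ h (T.adj.homEquiv _ _ F) :=
  (TheoryCat.adj_homEquiv_hom_comp h F).trans
    ((congrArg (TheoryCat.homEquiv h ≫ ·) (Monad.free_hom_f_eq F)).trans
      ((Category.assoc _ _ _).symm.trans (homEquiv_comp_map_comp_segalStructureMap φ _ _)))

noncomputable def theoryNerveSegalAlgebraIso : (theoryNerve i₀ T).obj (segalAlgebra φ) ≅ Z :=
  NatIso.ofComponents
    (fun X => ((nerveIsoTheoryResTheoryNerve (i₀ := i₀) (segalAlgebra φ)).app (op X.unop)).symm ≪≫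
      φ.app (op X.unop))
    fun {X Y} h => by
      ext F
      exact (congrArg (φ.hom.app _) (adj_homEquiv_hom_comp_segalAlgebra φ h.unop F)).trans
        (hom_app_segalAct φ _ _)

end SegalAlgebra

theorem segal_condition_iff_in_essImage_general
    (i₀ : Θ₀ ⥤ A) (hd : IsDenseF i₀)
    (T : Monad A)
    -- and the nerve of the arities sends it to a left Kan extension
    (h₂ : Functor.IsLeftKanExtension (T.toFunctor ⋙ nerveOf i₀)
      (𝟙 (i₀ ⋙ T.toFunctor ⋙ nerveOf i₀))) :
    ∀ Z : (TheoryCat i₀ T)ᵒᵖ ⥤ Type v,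
      (∃ M : T.Algebra, Nonempty ((theoryNerve i₀ T).obj M ≅ Z)) ↔
      (∃ a : A, Nonempty ((nerveOf i₀).obj a ≅ (theoryRes i₀ T).obj Z)) := by
  intro Z
  have := hd.1
  have := hd.2
  constructor
  · rintro ⟨M, ⟨ε⟩⟩
    exact ⟨M.A, ⟨nerveIsoTheoryResTheoryNerve M ≪≫ (theoryRes i₀ T).mapIso ε⟩⟩
  · rintro ⟨a, ⟨φ⟩⟩
    exact ⟨segalAlgebra φ, ⟨theoryNerveSegalAlgebraIso φ⟩⟩

/-- Weber's nerve theorem, Segal-condition form: for a monad with arities, a presheaf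
on the theory `Θ_T` is in the essential image of the nerve `N_T` iff it satisfies the
generalized Segal condition, i.e. its restriction along `j` is in the essential image
of the nerve of the arities. -/
theorem segal_condition_iff_in_essImage
    (i₀ : Θ₀ ⥤ A) [i₀.Full] [i₀.Faithful] (hd : IsDenseF i₀) [HasColimits A]
    (T : Monad A)
    -- `T` is a left Kan extension of its restriction to the arities
    (h₁ : Functor.IsLeftKanExtension T.toFunctor (𝟙 (i₀ ⋙ T.toFunctor)))
    -- and the nerve of the arities sends it to a left Kan extension
    (h₂ : Functor.IsLeftKanExtension (T.toFunctor ⋙ nerveOf i₀)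
      (𝟙 (i₀ ⋙ T.toFunctor ⋙ nerveOf i₀))) :
    ∀ Z : (TheoryCat i₀ T)ᵒᵖ ⥤ Type v,
      (∃ M : T.Algebra, Nonempty ((theoryNerve i₀ T).obj M ≅ Z)) ↔
      (∃ a : A, Nonempty ((nerveOf i₀).obj a ≅ (theoryRes i₀ T).obj Z)) :=
  segal_condition_iff_in_essImage_general i₀ hd T h₂
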